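/- For all p_0, p_1 with 0 < p_0, p_1 < 1 and every λ with 0 ≤ λ ≤ 1, the relative discrepancy satisfies B(λ) := max{RR/WR(λ), WR(λ)/RR} ≥ 1, with equality for a given λ if and only if WR(λ) = RR; moreover when p_0 ≠ p_1 one has B(λ) > 1 for every λ ∈ [0,1]. -/

import Mathlib

/-- The Aranda-Ordaz transformation `W_λ(θ)`: equals `((1-θ)^(-λ) - 1)/λ` for `λ ≠ 0`
and `-log(1-θ)` for `λ = 0`. -/
noncomputable def arandaOrdaz (l θ : ℝ) : ℝ :=
  if l = 0 then -Real.log (1 - θ) else ((1 - θ) ^ (-l) - 1) / l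

/-- The transformation-based ratio `WR(λ) = W_λ(p₁)/W_λ(p₀)`. -/
noncomputable def WR (p₀ p₁ l : ℝ) : ℝ := arandaOrdaz l p₁ / arandaOrdaz l p₀

/-- The relative discrepancy `B(λ) = max{RR/WR(λ), WR(λ)/RR}` with `RR = p₁/p₀`. -/
noncomputable def B (p₀ p₁ l : ℝ) : ℝ :=
  max ((p₁ / p₀) / WR p₀ p₁ l) (WR p₀ p₁ l / (p₁ / p₀))

/-! Since `W_λ(0) = 0` and `W_λ` is strictly convex on `(-∞, 1)` for `λ > -1` (its derivative
`(1 - θ)^(-(λ+1))` is strictly increasing), the chord slope `W_λ(θ)/θ` is strictly increasing.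
Hence `WR(λ) = RR`, i.e. `W_λ(p₁)/p₁ = W_λ(p₀)/p₀`, forces `p₀ = p₁`; and `max {a/b, b/a} ≥ 1`
with equality exactly when `a = b`. -/

section MaxDivDiv

variable {K : Type*} [Field K] [LinearOrder K] [IsStrictOrderedRing K] {a b : K}

lemma one_le_max_div_div (ha : 0 < a) (hb : 0 < b) : 1 ≤ max (a / b) (b / a) := by
  rcases le_total a b with hab | hba
  · exact le_max_of_le_right ((one_le_div ha).mpr hab)
  · exact le_max_of_le_left ((one_le_div hb).mpr hba)

lemma max_div_div_eq_one_iff (ha : 0 < a) (hb : 0 < b) : max (a / b) (b / a) = 1 ↔ a = b := by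
  constructor
  · intro h
    have hab : a / b ≤ 1 := h ▸ le_max_left _ _
    have hba : b / a ≤ 1 := h ▸ le_max_right _ _
    exact le_antisymm ((div_le_one hb).mp hab) ((div_le_one ha).mp hba)
  · rintro rfl
    simp [ha.ne']

end MaxDivDiv

lemma StrictConvexOn.strictMonoOn_div_self {s : Set ℝ} {f : ℝ → ℝ} (hf : StrictConvexOn ℝ s f)
    (h0 : 0 ∈ s) (hf0 : f 0 = 0) : StrictMonoOn (fun x => f x / x) (s \ {0}) := by
  intro x hx y hy hxy
  simpa [hf0] using hf.secant_strict_mono h0 hx.1 hy.1 hx.2 hy.2 hxy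

section ArandaOrdaz

open Set

variable (l : ℝ)

lemma arandaOrdaz_zero : arandaOrdaz l 0 = 0 := by
  unfold arandaOrdaz
  split_ifs <;> simp

lemma hasDerivAt_arandaOrdaz {x : ℝ} (hx : x < 1) :
    HasDerivAt (arandaOrdaz l) ((1 - x) ^ (-(l + 1))) x := by
  have hx' : 0 < 1 - x := sub_pos.mpr hx
  have hsub : HasDerivAt (fun y : ℝ => 1 - y) (-1) x := by
    simpa using (hasDerivAt_id x).const_sub 1
  by_cases hl : l = 0
  · subst hl
    have hfun : arandaOrdaz 0 = fun y => -Real.log (1 - y) := funext fun _ => if_pos rfl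
    rw [hfun, zero_add, Real.rpow_neg_one]
    exact ((hsub.log hx'.ne').neg).congr_deriv (by field_simp)
  · have hfun : arandaOrdaz l = fun y => ((1 - y) ^ (-l) - 1) / l := funext fun _ => if_neg hl
    rw [hfun]
    refine (((hsub.rpow_const (p := -l) (Or.inl hx'.ne')).sub_const 1).div_const l).congr_deriv ?_
    rw [show -l - 1 = -(l + 1) by ring]
    field_simp

lemma continuousOn_arandaOrdaz : ContinuousOn (arandaOrdaz l) (Iio 1) :=
  fun _ hx => (hasDerivAt_arandaOrdaz l hx).continuousAt.continuousWithinAt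

lemma strictMonoOn_arandaOrdaz : StrictMonoOn (arandaOrdaz l) (Iio 1) := by
  refine strictMonoOn_of_deriv_pos (convex_Iio 1) (continuousOn_arandaOrdaz l) fun x hx => ?_
  rw [interior_Iio] at hx
  rw [(hasDerivAt_arandaOrdaz l hx).deriv]
  exact Real.rpow_pos_of_pos (sub_pos.mpr hx) _

lemma arandaOrdaz_pos {θ : ℝ} (h0 : 0 < θ) (h1 : θ < 1) : 0 < arandaOrdaz l θ := by
  simpa [arandaOrdaz_zero] using
    strictMonoOn_arandaOrdaz l (show (0 : ℝ) < 1 by norm_num) h1 h0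

variable {l}

lemma strictConvexOn_arandaOrdaz (hl : -1 < l) : StrictConvexOn ℝ (Iio 1) (arandaOrdaz l) := by
  refine StrictMonoOn.strictConvexOn_of_deriv (convex_Iio 1) (continuousOn_arandaOrdaz l) ?_
  rw [interior_Iio]
  intro x hx y hy hxy
  rw [(hasDerivAt_arandaOrdaz l hx).deriv, (hasDerivAt_arandaOrdaz l hy).deriv]
  exact Real.rpow_lt_rpow_of_neg (sub_pos.mpr hy) (by linarith) (by linarith)

lemma strictMonoOn_arandaOrdaz_div_self (hl : -1 < l) :
    StrictMonoOn (fun θ => arandaOrdaz l θ / θ) (Ioo 0 1) :=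
  ((strictConvexOn_arandaOrdaz hl).strictMonoOn_div_self (by norm_num)
    (arandaOrdaz_zero l)).mono fun _ hθ => ⟨hθ.2, hθ.1.ne'⟩

end ArandaOrdaz

/-- For all `0 < p₀, p₁ < 1` and every `λ ∈ [0,1]`: `B(λ) ≥ 1`, with `B(λ) = 1`
iff `WR(λ) = RR`; moreover if `p₀ ≠ p₁` then `B(λ) > 1`. -/
theorem B_ge_one (p₀ p₁ : ℝ) (h00 : 0 < p₀) (h01 : p₀ < 1)
    (h10 : 0 < p₁) (h11 : p₁ < 1) :
    ∀ l : ℝ, 0 ≤ l → l ≤ 1 →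
      1 ≤ B p₀ p₁ l ∧ (B p₀ p₁ l = 1 ↔ WR p₀ p₁ l = p₁ / p₀) ∧
        (p₀ ≠ p₁ → 1 < B p₀ p₁ l) := by
  intro l hl _
  have hW₀ := arandaOrdaz_pos l h00 h01
  have hW₁ := arandaOrdaz_pos l h10 h11
  have hRR : 0 < p₁ / p₀ := div_pos h10 h00
  have hWR : 0 < WR p₀ p₁ l := div_pos hW₁ hW₀
  have hB_eq_one : B p₀ p₁ l = 1 ↔ WR p₀ p₁ l = p₁ / p₀ :=
    (max_div_div_eq_one_iff hRR hWR).trans eq_comm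
  refine ⟨one_le_max_div_div hRR hWR, hB_eq_one, fun hp => ?_⟩
  refine (one_le_max_div_div hRR hWR).lt_of_ne' fun hB => hp ?_
  have hslope : arandaOrdaz l p₀ / p₀ = arandaOrdaz l p₁ / p₁ := by
    have := hB_eq_one.mp hB
    rw [WR, div_eq_div_iff hW₀.ne' h00.ne'] at this
    rw [div_eq_div_iff h00.ne' h10.ne']
    linarith
  exact (strictMonoOn_arandaOrdaz_div_self (by linarith)).injOn ⟨h00, h01⟩ ⟨h10, h11⟩ hslope
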